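/- Let d be a positive integer, let Σ₀ and Σ_q be symmetric positive definite d×d real matrices, let G be a symmetric positive semi-definite d×d real matrix, and let Σ̄ be a symmetric positive definite d×d matrix such that Σ̄⁻¹ = Σ_q⁻¹ + P for some symmetric positive semi-definite matrix P. Define Σ̂ = (Σ₀⁻¹ + G)⁻¹ + (Σ₀⁻¹ + G)⁻¹ Σ₀⁻¹ Σ̄ Σ₀⁻¹ (Σ₀⁻¹ + G)⁻¹. Then for every a ∈ ℝ^d with ‖a‖₂ ≤ 1, aᵀ Σ̂ a ≤ λ₁(Σ₀) + λ₁(Σ₀)² λ₁(Σ_q) / λ_d(Σ₀)², where λ₁(M) and λ_d(M) denote the maximum and minimum eigenvalue of a symmetric d×d real matrix M. -/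

import Mathlib

open Matrix Real

/-- Maximum eigenvalue λ₁ of a symmetric (Hermitian) real matrix. -/
noncomputable def maxEig {d : ℕ} (M : Matrix (Fin d) (Fin d) ℝ) : ℝ :=
  if h : M.IsHermitian then ⨆ i, h.eigenvalues i else 0

/-- Minimum eigenvalue λ_d of a symmetric (Hermitian) real matrix. -/
noncomputable def minEig {d : ℕ} (M : Matrix (Fin d) (Fin d) ℝ) : ℝ :=
  if h : M.IsHermitian then ⨅ i, h.eigenvalues i else 0

/-- The positive semidefinite square root of a positive semidefinite matrix
(junk value `1` otherwise). -/
noncomputable def matSqrt {d : ℕ} (M : Matrix (Fin d) (Fin d) ℝ) : Matrix (Fin d) (Fin d) ℝ :=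
  @dite _ M.PosSemidef (Classical.propDecidable _) (fun h => (h.1.eigenvectorUnitary : Matrix (Fin d) (Fin d) ℝ) *
    diagonal ((RCLike.ofReal : ℝ → ℝ) ∘ Real.sqrt ∘ h.1.eigenvalues) *
    (star h.1.eigenvectorUnitary : Matrix (Fin d) (Fin d) ℝ)) (fun _ => 1)

section AuxLemmas
variable {d : ℕ}

lemma psd_nonneg {M : Matrix (Fin d) (Fin d) ℝ} (hM : M.PosSemidef) (x : Fin d → ℝ) :
    0 ≤ x ⬝ᵥ (M *ᵥ x) := by
  simpa using hM.dotProduct_mulVec_nonneg x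

lemma dot_self_nonneg (x : Fin d → ℝ) : 0 ≤ x ⬝ᵥ x :=
  Finset.sum_nonneg fun i _ => mul_self_nonneg (x i)

lemma dot_cs (x y : Fin d → ℝ) : (x ⬝ᵥ y) ^ 2 ≤ (x ⬝ᵥ x) * (y ⬝ᵥ y) := by
  have := Finset.sum_mul_sq_le_sq_mul_sq Finset.univ x y
  simpa [dotProduct, sq] using this

lemma herm_swap {M : Matrix (Fin d) (Fin d) ℝ} (hM : M.IsHermitian) (x y : Fin d → ℝ) :
    x ⬝ᵥ (M *ᵥ y) = (M *ᵥ x) ⬝ᵥ y := by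
  rw [Matrix.dotProduct_mulVec, ← Matrix.mulVec_transpose]
  congr 1
  rw [← Matrix.conjTranspose_eq_transpose_of_trivial, hM.eq]

lemma spectral_comb {M : Matrix (Fin d) (Fin d) ℝ} (hM : M.IsHermitian) (c e : ℝ) :
    c • (1 : Matrix (Fin d) (Fin d) ℝ) + e • M =
      ((hM.eigenvectorUnitary : Matrix (Fin d) (Fin d) ℝ) *
        (Matrix.diagonal fun i => c + e * hM.eigenvalues i)) *
        (hM.eigenvectorUnitary : Matrix (Fin d) (Fin d) ℝ)ᴴ := by
  have hU : (hM.eigenvectorUnitary : Matrix (Fin d) (Fin d) ℝ) *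
      (hM.eigenvectorUnitary : Matrix (Fin d) (Fin d) ℝ)ᴴ = 1 := by
    have := Matrix.mem_unitaryGroup_iff.mp hM.eigenvectorUnitary.2
    simpa [Matrix.star_eq_conjTranspose] using this
  have hD : (Matrix.diagonal fun i => c + e * hM.eigenvalues i)
      = c • (1 : Matrix (Fin d) (Fin d) ℝ) + e • Matrix.diagonal (fun i => hM.eigenvalues i) := by
    ext i j
    by_cases h : i = j <;> simp [Matrix.diagonal_apply, Matrix.one_apply, h]
  rw [hD, Matrix.mul_add, Matrix.add_mul, Matrix.mul_smul, Matrix.smul_mul, Matrix.mul_one, hU,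
    Matrix.mul_smul, Matrix.smul_mul]
  congr 1
  conv_lhs => rw [hM.spectral_theorem]
  simp [Matrix.star_eq_conjTranspose, Function.comp_def]

lemma quadform_le_maxEig (hd : 0 < d) {M : Matrix (Fin d) (Fin d) ℝ} (hM : M.IsHermitian)
    (x : Fin d → ℝ) : x ⬝ᵥ (M *ᵥ x) ≤ maxEig M * (x ⬝ᵥ x) := by
  haveI : Nonempty (Fin d) := ⟨⟨0, hd⟩⟩
  set c := maxEig M with hc
  have hc' : c = ⨆ i, hM.eigenvalues i := by rw [hc, maxEig, dif_pos hM]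
  have hpsd : (c • (1 : Matrix (Fin d) (Fin d) ℝ) + (-1 : ℝ) • M).PosSemidef := by
    rw [spectral_comb hM c (-1)]
    refine (Matrix.posSemidef_diagonal_iff.mpr fun i => ?_).mul_mul_conjTranspose_same _
    have := le_ciSup (Set.Finite.bddAbove (Set.finite_range hM.eigenvalues)) i
    rw [← hc'] at this
    linarith
  have h0 := psd_nonneg hpsd x
  rw [Matrix.add_mulVec, Matrix.smul_mulVec, Matrix.smul_mulVec, Matrix.one_mulVec,
    dotProduct_add, dotProduct_smul, dotProduct_smul] at h0
  simp only [smul_eq_mul, neg_one_mul] at h0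
  linarith

lemma minEig_quadform_le (hd : 0 < d) {M : Matrix (Fin d) (Fin d) ℝ} (hM : M.IsHermitian)
    (x : Fin d → ℝ) : minEig M * (x ⬝ᵥ x) ≤ x ⬝ᵥ (M *ᵥ x) := by
  haveI : Nonempty (Fin d) := ⟨⟨0, hd⟩⟩
  set c := minEig M with hc
  have hc' : c = ⨅ i, hM.eigenvalues i := by rw [hc, minEig, dif_pos hM]
  have hpsd : ((-c) • (1 : Matrix (Fin d) (Fin d) ℝ) + (1 : ℝ) • M).PosSemidef := by
    rw [spectral_comb hM (-c) 1]
    refine (Matrix.posSemidef_diagonal_iff.mpr fun i => ?_).mul_mul_conjTranspose_same _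
    have := ciInf_le (Set.Finite.bddBelow (Set.finite_range hM.eigenvalues)) i
    rw [← hc'] at this
    linarith
  have h0 := psd_nonneg hpsd x
  rw [Matrix.add_mulVec, Matrix.smul_mulVec, Matrix.smul_mulVec, Matrix.one_mulVec,
    dotProduct_add, dotProduct_smul, dotProduct_smul] at h0
  simp only [smul_eq_mul, one_mul, neg_mul] at h0
  linarith

lemma minEig_pos (hd : 0 < d) {M : Matrix (Fin d) (Fin d) ℝ} (hM : M.PosDef) :
    0 < minEig M := by
  haveI : Nonempty (Fin d) := ⟨⟨0, hd⟩⟩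
  rw [minEig, dif_pos hM.isHermitian]
  obtain ⟨i₀, hi₀⟩ := Finite.exists_min hM.isHermitian.eigenvalues
  have : ⨅ i, hM.isHermitian.eigenvalues i = hM.isHermitian.eigenvalues i₀ :=
    le_antisymm (ciInf_le (Set.Finite.bddBelow (Set.finite_range _)) i₀) (le_ciInf hi₀)
  rw [this]
  exact hM.eigenvalues_pos i₀

lemma maxEig_pos (hd : 0 < d) {M : Matrix (Fin d) (Fin d) ℝ} (hM : M.PosDef) :
    0 < maxEig M := by
  haveI : Nonempty (Fin d) := ⟨⟨0, hd⟩⟩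
  rw [maxEig, dif_pos hM.isHermitian]
  have h1 := le_ciSup (Set.Finite.bddAbove (Set.finite_range hM.isHermitian.eigenvalues)) ⟨0, hd⟩
  exact lt_of_lt_of_le (hM.eigenvalues_pos ⟨0, hd⟩) h1

lemma inv_mulVec_cancel {M : Matrix (Fin d) (Fin d) ℝ} (hM : M.PosDef) (x : Fin d → ℝ) :
    M⁻¹ *ᵥ (M *ᵥ x) = x := by
  rw [Matrix.mulVec_mulVec, Matrix.nonsing_inv_mul _ hM.det_pos.ne'.isUnit, Matrix.one_mulVec]

lemma mulVec_inv_cancel {M : Matrix (Fin d) (Fin d) ℝ} (hM : M.PosDef) (x : Fin d → ℝ) :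
    M *ᵥ (M⁻¹ *ᵥ x) = x := by
  rw [Matrix.mulVec_mulVec, Matrix.mul_nonsing_inv _ hM.det_pos.ne'.isUnit, Matrix.one_mulVec]

/-- Cauchy–Schwarz-type inequality: (xᵀx)² ≤ (xᵀMx)(xᵀM⁻¹x) for positive definite M. -/
lemma inv_cs {M : Matrix (Fin d) (Fin d) ℝ} (hM : M.PosDef) (x : Fin d → ℝ) :
    (x ⬝ᵥ x) ^ 2 ≤ (x ⬝ᵥ (M *ᵥ x)) * (x ⬝ᵥ (M⁻¹ *ᵥ x)) := by
  by_cases hx : x = 0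
  · simp [hx]
  have hq : 0 < x ⬝ᵥ (M *ᵥ x) := by simpa using hM.dotProduct_mulVec_pos hx
  set s := x ⬝ᵥ x with hs
  set t := s / (x ⬝ᵥ (M *ᵥ x)) with ht
  have h0 := psd_nonneg hM.inv.posSemidef (x - t • (M *ᵥ x))
  have e1 : M⁻¹ *ᵥ (M *ᵥ x) = x := inv_mulVec_cancel hM x
  have e2 : (M *ᵥ x) ⬝ᵥ (M⁻¹ *ᵥ x) = s := by
    rw [herm_swap hM.inv.isHermitian (M *ᵥ x) x, e1, hs]
  have e3 : x ⬝ᵥ (M⁻¹ *ᵥ (M *ᵥ x)) = s := by rw [e1, hs]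
  have e4 : (M *ᵥ x) ⬝ᵥ (M⁻¹ *ᵥ (M *ᵥ x)) = x ⬝ᵥ (M *ᵥ x) := by
    rw [e1, dotProduct_comm]
  simp only [Matrix.mulVec_sub, Matrix.mulVec_smul, sub_dotProduct,
    dotProduct_sub, smul_dotProduct, dotProduct_smul, e1, e2, e3, e4,
    smul_eq_mul] at h0
  have e5 : (M *ᵥ x) ⬝ᵥ x = x ⬝ᵥ (M *ᵥ x) := dotProduct_comm _ _
  rw [e5] at h0
  have hts : t * (x ⬝ᵥ (M *ᵥ x)) = s := by rw [ht]; field_simp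
  nlinarith [h0, hq, sq_nonneg t]

/-- If B⁻¹ ⪯ A (as quadratic forms) with A, B pos. def., then A⁻¹ ⪯ B. -/
lemma inv_antitone {A B : Matrix (Fin d) (Fin d) ℝ} (hA : A.PosDef) (hB : B.PosDef)
    (h : ∀ x, x ⬝ᵥ (B⁻¹ *ᵥ x) ≤ x ⬝ᵥ (A *ᵥ x)) (x : Fin d → ℝ) :
    x ⬝ᵥ (A⁻¹ *ᵥ x) ≤ x ⬝ᵥ (B *ᵥ x) := by
  set z := A⁻¹ *ᵥ x with hz
  have hAz : A *ᵥ z = x := mulVec_inv_cancel hA x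
  have hzx : z ⬝ᵥ x = x ⬝ᵥ (A⁻¹ *ᵥ x) := dotProduct_comm z x
  have key1 : x ⬝ᵥ (A⁻¹ *ᵥ x) = 2 * (z ⬝ᵥ x) - z ⬝ᵥ (A *ᵥ z) := by
    rw [hAz, hzx]; ring
  have h0 := psd_nonneg hB.inv.posSemidef (z - B *ᵥ x)
  have e1 : B⁻¹ *ᵥ (B *ᵥ x) = x := inv_mulVec_cancel hB x
  have e2 : (B *ᵥ x) ⬝ᵥ (B⁻¹ *ᵥ z) = z ⬝ᵥ x := by
    rw [herm_swap hB.inv.isHermitian (B *ᵥ x) z, e1, dotProduct_comm]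
  have e3 : z ⬝ᵥ (B⁻¹ *ᵥ (B *ᵥ x)) = z ⬝ᵥ x := by rw [e1]
  have e4 : (B *ᵥ x) ⬝ᵥ (B⁻¹ *ᵥ (B *ᵥ x)) = x ⬝ᵥ (B *ᵥ x) := by
    rw [e1, dotProduct_comm]
  simp only [Matrix.mulVec_sub, sub_dotProduct, dotProduct_sub, e1, e2, e3,
    e4] at h0
  have e5 : (B *ᵥ x) ⬝ᵥ x = x ⬝ᵥ (B *ᵥ x) := dotProduct_comm _ _
  have e6 : x ⬝ᵥ z = z ⬝ᵥ x := dotProduct_comm _ _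
  rw [e5] at h0
  have hz2 := h z
  linarith

end AuxLemmas

/-- The bound on σ_max² from the proof of Lemma 1: with
Σ̂ = (Σ₀⁻¹ + G)⁻¹ + (Σ₀⁻¹ + G)⁻¹ Σ₀⁻¹ Σ̄ Σ₀⁻¹ (Σ₀⁻¹ + G)⁻¹ and Σ̄⁻¹ = Σ_q⁻¹ + P with P ⪰ 0,
for every a with ‖a‖₂ ≤ 1 one has aᵀ Σ̂ a ≤ λ₁(Σ₀) + λ₁(Σ₀)² λ₁(Σ_q) / λ_d(Σ₀)².
(Here S0 = Σ₀, Sq = Σ_q, Sbar = Σ̄, Shat = Σ̂.) -/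
theorem sigma_max_bound {d : ℕ} (hd : 0 < d)
    (S0 Sq G Sbar P : Matrix (Fin d) (Fin d) ℝ)
    (hS0 : S0.PosDef) (hSq : Sq.PosDef) (hG : G.PosSemidef)
    (hSbar : Sbar.PosDef) (hP : P.PosSemidef)
    (hSbarInv : Sbar⁻¹ = Sq⁻¹ + P)
    (Shat : Matrix (Fin d) (Fin d) ℝ)
    (hShat : Shat = (S0⁻¹ + G)⁻¹ + (S0⁻¹ + G)⁻¹ * S0⁻¹ * Sbar * S0⁻¹ * (S0⁻¹ + G)⁻¹)
    (a : Fin d → ℝ) (ha : ∑ i, a i ^ 2 ≤ 1) :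
    a ⬝ᵥ (Shat *ᵥ a) ≤ maxEig S0 + maxEig S0 ^ 2 * maxEig Sq / minEig S0 ^ 2 := by
  haveI : Nonempty (Fin d) := ⟨⟨0, hd⟩⟩
  have hA : (S0⁻¹ + G).PosDef := hS0.inv.add_posSemidef hG
  set A := S0⁻¹ + G with hAdef
  set L1 := maxEig S0 with hL1def
  set Ld := minEig S0 with hLddef
  set Lq := maxEig Sq with hLqdef
  clear_value A L1 Ld Lq
  have hL1 : 0 < L1 := by rw [hL1def]; exact maxEig_pos hd hS0
  have hLd : 0 < Ld := by rw [hLddef]; exact minEig_pos hd hS0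
  have hLq : 0 < Lq := by rw [hLqdef]; exact maxEig_pos hd hSq
  set y := A⁻¹ *ᵥ a with hy
  set b := S0⁻¹ *ᵥ y with hb
  clear_value y b
  have haa : a ⬝ᵥ a ≤ 1 := by simpa [dotProduct, sq] using ha
  -- decomposition of the quadratic form
  have hsplit : a ⬝ᵥ (Shat *ᵥ a) = a ⬝ᵥ (A⁻¹ *ᵥ a) + b ⬝ᵥ (Sbar *ᵥ b) := by
    rw [hShat, Matrix.add_mulVec, dotProduct_add]
    congr 1
    have hexp : (A⁻¹ * S0⁻¹ * Sbar * S0⁻¹ * A⁻¹) *ᵥ a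
        = A⁻¹ *ᵥ (S0⁻¹ *ᵥ (Sbar *ᵥ (S0⁻¹ *ᵥ (A⁻¹ *ᵥ a)))) := by
      simp [Matrix.mulVec_mulVec, Matrix.mul_assoc]
    rw [hexp, ← hy, ← hb, herm_swap hA.inv.isHermitian, ← hy,
      herm_swap hS0.inv.isHermitian, ← hb]
  -- first term
  have hT1 : a ⬝ᵥ (A⁻¹ *ᵥ a) ≤ L1 := by
    have hcomp : ∀ x, x ⬝ᵥ (S0⁻¹ *ᵥ x) ≤ x ⬝ᵥ (A *ᵥ x) := by
      intro x
      rw [hAdef, Matrix.add_mulVec, dotProduct_add]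
      have := psd_nonneg hG x
      linarith
    have h1 : a ⬝ᵥ (A⁻¹ *ᵥ a) ≤ a ⬝ᵥ (S0 *ᵥ a) := inv_antitone hA hS0 hcomp a
    have h2 := quadform_le_maxEig hd hS0.isHermitian a
    have h3 : L1 * (a ⬝ᵥ a) ≤ L1 * 1 := by
      exact mul_le_mul_of_nonneg_left haa hL1.le
    rw [← hL1def] at h2
    linarith
  -- second term, step 1 : b Sbar b ≤ Lq * (b ⬝ᵥ b)
  have hT2a : b ⬝ᵥ (Sbar *ᵥ b) ≤ Lq * (b ⬝ᵥ b) := by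
    have hcomp : ∀ x, x ⬝ᵥ (Sq⁻¹ *ᵥ x) ≤ x ⬝ᵥ (Sbar⁻¹ *ᵥ x) := by
      intro x
      rw [hSbarInv, Matrix.add_mulVec, dotProduct_add]
      have := psd_nonneg hP x
      linarith
    have h1 : b ⬝ᵥ (Sbar⁻¹⁻¹ *ᵥ b) ≤ b ⬝ᵥ (Sq *ᵥ b) := inv_antitone hSbar.inv hSq hcomp b
    rw [Matrix.nonsing_inv_nonsing_inv _ hSbar.det_pos.ne'.isUnit] at h1
    have h2 := quadform_le_maxEig hd hSq.isHermitian b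
    rw [← hLqdef] at h2
    linarith
  -- norms
  have hAy : A *ᵥ y = a := by rw [hy]; exact mulVec_inv_cancel hA a
  have hS0b : S0 *ᵥ b = y := by rw [hb]; exact mulVec_inv_cancel hS0 y
  have hyy : y ⬝ᵥ y ≤ L1 ^ 2 := by
    rcases (dot_self_nonneg y).eq_or_lt with h0 | h0
    · nlinarith [sq_nonneg L1]
    · have h3 := inv_cs hS0 y
      have h4 := quadform_le_maxEig hd hS0.isHermitian y
      rw [← hL1def] at h4
      have h5 : y ⬝ᵥ (S0⁻¹ *ᵥ y) ≤ y ⬝ᵥ a := by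
        have hGy := psd_nonneg hG y
        have hAy2 : y ⬝ᵥ (A *ᵥ y) = y ⬝ᵥ a := by rw [hAy]
        rw [← hAy2, hAdef, Matrix.add_mulVec, dotProduct_add]
        linarith
      have h6 := dot_cs y a
      have hS0invnn := psd_nonneg hS0.inv.posSemidef y
      have hS0nn := psd_nonneg hS0.posSemidef y
      -- y⬝y ≤ L1 * (y⬝a)
      have hstep : y ⬝ᵥ y ≤ L1 * (y ⬝ᵥ a) := by
        have : (y ⬝ᵥ y) * (y ⬝ᵥ y) ≤ (L1 * (y ⬝ᵥ a)) * (y ⬝ᵥ y) := by nlinarith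
        exact le_of_mul_le_mul_right this h0
      have hya : 0 < y ⬝ᵥ a := by nlinarith
      have hya2 : y ⬝ᵥ a ≤ L1 := by
        have hya3 : (y ⬝ᵥ a) * (y ⬝ᵥ a) ≤ L1 * (y ⬝ᵥ a) := by nlinarith
        exact le_of_mul_le_mul_right hya3 hya
      nlinarith
  have hbb : Ld ^ 2 * (b ⬝ᵥ b) ≤ y ⬝ᵥ y := by
    rcases (dot_self_nonneg b).eq_or_lt with h0 | h0
    · nlinarith [dot_self_nonneg y]
    · have h1 : Ld * (b ⬝ᵥ b) ≤ b ⬝ᵥ y := by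
        have := minEig_quadform_le hd hS0.isHermitian b
        rw [hS0b, ← hLddef] at this
        exact this
      have h2 := dot_cs b y
      have hby : 0 ≤ b ⬝ᵥ y := le_trans (by positivity) h1
      have hsq : (Ld * (b ⬝ᵥ b)) ^ 2 ≤ (b ⬝ᵥ y) ^ 2 :=
        pow_le_pow_left₀ (by positivity) h1 2
      have e : (Ld * (b ⬝ᵥ b)) ^ 2 = (Ld ^ 2 * (b ⬝ᵥ b)) * (b ⬝ᵥ b) := by ring
      have e2 : (b ⬝ᵥ b) * (y ⬝ᵥ y) = (y ⬝ᵥ y) * (b ⬝ᵥ b) := mul_comm _ _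
      have hfin : (Ld ^ 2 * (b ⬝ᵥ b)) * (b ⬝ᵥ b) ≤ (y ⬝ᵥ y) * (b ⬝ᵥ b) := by linarith
      exact le_of_mul_le_mul_right hfin h0
  -- put it together
  have hbbub : b ⬝ᵥ b ≤ L1 ^ 2 / Ld ^ 2 := by
    rw [le_div_iff₀ (by positivity : (0:ℝ) < Ld ^ 2)]
    have e : (b ⬝ᵥ b) * Ld ^ 2 = Ld ^ 2 * (b ⬝ᵥ b) := mul_comm _ _
    linarith
  have hT2 : b ⬝ᵥ (Sbar *ᵥ b) ≤ L1 ^ 2 * Lq / Ld ^ 2 := by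
    have h1 : Lq * (b ⬝ᵥ b) ≤ Lq * (L1 ^ 2 / Ld ^ 2) := mul_le_mul_of_nonneg_left hbbub hLq.le
    have h2 : Lq * (L1 ^ 2 / Ld ^ 2) = L1 ^ 2 * Lq / Ld ^ 2 := by ring
    linarith
  rw [hsplit]
  linarith
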